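/- Let υ1 and υ2 be hybrid inputs with dom υ1 compact. Then their concatenation υ = υ1|υ2 is also a hybrid input. -/

import Mathlib

open MeasureTheory Set Metric

noncomputable section

/-- A hybrid time domain: a subset of `ℝ≥0 × ℕ` such that, for each `(T, J)` in it,
its intersection with `[0,T] × {0,…,J}` is a finite union `⋃_{j=0}^{J} [t_j, t_{j+1}] × {j}`
for some nondecreasing finite sequence `0 = t_0 ≤ t_1 ≤ ⋯ ≤ t_{J+1} = T`. -/
def IsHybridTimeDomain (E : Set (ℝ × ℕ)) : Prop :=
  (∀ p ∈ E, 0 ≤ p.1) ∧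
  ∀ p ∈ E, ∃ t : ℕ → ℝ, t 0 = 0 ∧ t (p.2 + 1) = p.1 ∧
    (∀ j, j ≤ p.2 → t j ≤ t (j + 1)) ∧
    E ∩ (Set.Icc (0 : ℝ) p.1 ×ˢ {j : ℕ | j ≤ p.2}) =
      ⋃ j ∈ Set.Iic p.2, Set.Icc (t j) (t (j + 1)) ×ˢ ({j} : Set ℕ)

/-- `(T, J)` is the maximal element of the hybrid time domain `E`. -/
def IsMaxOfDomain (E : Set (ℝ × ℕ)) (T : ℝ) (J : ℕ) : Prop :=
  (T, J) ∈ E ∧ ∀ p ∈ E, p.1 ≤ T ∧ p.2 ≤ J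

/-- The domain of the concatenation: `E1 ∪ (E2 + {(T, J)})` (Minkowski sum). -/
def ConcatDom (T : ℝ) (J : ℕ) (E1 E2 : Set (ℝ × ℕ)) : Set (ℝ × ℕ) :=
  E1 ∪ (fun p : ℝ × ℕ => (p.1 + T, p.2 + J)) '' E2

/-- `f` is the concatenation of `f2` to `f1` (with `(T, J) = max dom f1`):
`f = f1` on `E1 \ {(T,J)}`, and `f (t + T, j + J) = f2 (t, j)` on `E2`. -/
def IsConcatOf {Y : Type*} (T : ℝ) (J : ℕ) (E1 E2 : Set (ℝ × ℕ))
    (f1 f2 f : ℝ × ℕ → Y) : Prop :=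
  (∀ p ∈ E1, p ≠ (T, J) → f p = f1 p) ∧
  (∀ p ∈ E2, f (p.1 + T, p.2 + J) = f2 p)

/-- The `j`-th time slice `I^j_E = {t : (t, j) ∈ E}` of a hybrid time domain. -/
def Slice (E : Set (ℝ × ℕ)) (j : ℕ) : Set ℝ := {t : ℝ | (t, j) ∈ E}

/-- `t ↦ υ (t, j)` is (Lebesgue) measurable on the slice `I^j_E`. -/
def MeasurableOnSlice {Y : Type*} [MeasurableSpace Y]
    (υ : ℝ × ℕ → Y) (E : Set (ℝ × ℕ)) (j : ℕ) : Prop :=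
  Measurable ((Slice E j).restrict fun t => υ (t, j))

/-- `t ↦ υ (t, j)` is locally essentially bounded on the slice `I^j_E`: every point of the
slice has an open neighborhood on which the function is bounded almost everywhere. -/
def LocEssBddOnSlice {Y : Type*} [NormedAddCommGroup Y]
    (υ : ℝ × ℕ → Y) (E : Set (ℝ × ℕ)) (j : ℕ) : Prop :=
  ∀ r ∈ Slice E j, ∃ U : Set ℝ, IsOpen U ∧ r ∈ U ∧ ∃ c : ℝ, 0 ≤ c ∧
    ∀ᵐ t ∂(volume : Measure ℝ), t ∈ U ∩ Slice E j → ‖υ (t, j)‖ ≤ c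

/-- A hybrid input: defined on a hybrid time domain, with each slice function Lebesgue
measurable and locally essentially bounded. -/
def IsHybridInput {Y : Type*} [MeasurableSpace Y] [NormedAddCommGroup Y]
    (υ : ℝ × ℕ → Y) (E : Set (ℝ × ℕ)) : Prop :=
  IsHybridTimeDomain E ∧
  ∀ j : ℕ, MeasurableOnSlice υ E j ∧ LocEssBddOnSlice υ E j

/-- `f` is absolutely continuous on `[a, b]` in the ε–δ sense: for every `ε > 0` there is
`δ > 0` such that every countable collection of disjoint subintervals `[u k, v k]` of `[a,b]`
of total length at most `δ` satisfies `Σ ‖f (v k) - f (u k)‖ ≤ ε`. -/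
def AbsContOnIcc {Y : Type*} [NormedAddCommGroup Y] (f : ℝ → Y) (a b : ℝ) : Prop :=
  ∀ ε > (0 : ℝ), ∃ δ > (0 : ℝ), ∀ u v : ℕ → ℝ,
    (∀ k, a ≤ u k ∧ u k ≤ v k ∧ v k ≤ b) →
    (Pairwise fun k l => Disjoint (Set.Ioo (u k) (v k)) (Set.Ioo (u l) (v l))) →
    (∀ s : Finset ℕ, ∑ k ∈ s, (v k - u k) ≤ δ) →
    ∀ s : Finset ℕ, ∑ k ∈ s, ‖f (v k) - f (u k)‖ ≤ ε

/-- `f` is locally absolutely continuous on the set `I`: it is absolutely continuous on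
every compact subinterval of `I`. -/
def LocAbsContOn {Y : Type*} [NormedAddCommGroup Y] (f : ℝ → Y) (I : Set ℝ) : Prop :=
  ∀ a b : ℝ, a ≤ b → Set.Icc a b ⊆ I → AbsContOnIcc f a b

/-- A hybrid arc: defined on a hybrid time domain, with each slice function locally
absolutely continuous. -/
def IsHybridArc {Y : Type*} [NormedAddCommGroup Y]
    (φ : ℝ × ℕ → Y) (E : Set (ℝ × ℕ)) : Prop :=
  IsHybridTimeDomain E ∧
  ∀ j : ℕ, LocAbsContOn (fun t => φ (t, j)) (Slice E j)

/-- `(φ, υ)` with common domain `E` is a solution pair to the hybrid system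
`H = (C, f, D, g)`. -/
def IsSolutionPair {X U : Type*} [NormedAddCommGroup X] [NormedSpace ℝ X]
    [NormedAddCommGroup U] [MeasurableSpace U]
    (C : Set (X × U)) (f : X × U → X) (D : Set (X × U)) (g : X × U → X)
    (φ : ℝ × ℕ → X) (υ : ℝ × ℕ → U) (E : Set (ℝ × ℕ)) : Prop :=
  IsHybridArc φ E ∧ IsHybridInput υ E ∧
  (φ (0, 0), υ (0, 0)) ∈ closure C ∪ D ∧
  (∀ j : ℕ, (interior (Slice E j)).Nonempty →
    (∀ t ∈ interior (Slice E j), (φ (t, j), υ (t, j)) ∈ C) ∧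
    ∀ᵐ t ∂(volume : Measure ℝ), t ∈ Slice E j →
      HasDerivAt (fun s => φ (s, j)) (f (φ (t, j), υ (t, j))) t) ∧
  ∀ (t : ℝ) (j : ℕ), (t, j) ∈ E → (t, j + 1) ∈ E →
    (φ (t, j), υ (t, j)) ∈ D ∧ φ (t, j + 1) = g (φ (t, j), υ (t, j))

/-- `(φ, υ)` with domain `E` is a motion plan to the motion planning problem
`P = (X0, Xf, Xu, (C, f, D, g))`. -/
def IsMotionPlan {X U : Type*} [NormedAddCommGroup X] [NormedSpace ℝ X]
    [NormedAddCommGroup U] [MeasurableSpace U]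
    (X0 Xf : Set X) (Xu : Set (X × U))
    (C : Set (X × U)) (f : X × U → X) (D : Set (X × U)) (g : X × U → X)
    (φ : ℝ × ℕ → X) (υ : ℝ × ℕ → U) (E : Set (ℝ × ℕ)) : Prop :=
  IsSolutionPair C f D g φ υ E ∧ φ (0, 0) ∈ X0 ∧
  ∃ (T : ℝ) (J : ℕ), (T, J) ∈ E ∧ φ (T, J) ∈ Xf ∧
    ∀ (t : ℝ) (j : ℕ), (t, j) ∈ E → t + (j : ℝ) ≤ T + (J : ℝ) →
      (φ (t, j), υ (t, j)) ∉ Xu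

/-- Truncation of a hybrid time domain up to hybrid time `(T, J)`. -/
def TruncDom (E : Set (ℝ × ℕ)) (T : ℝ) (J : ℕ) : Set (ℝ × ℕ) :=
  E ∩ (Set.Icc (0 : ℝ) T ×ˢ {j : ℕ | j ≤ J})

/-- The `δ`-inflation of a set `S ⊆ X × U`:
`{(x,u) : ∃ (y,v) ∈ S, x ∈ y + δB, u ∈ v + δB}` with `B` the closed unit ball. -/
def Inflate {X U : Type*} [NormedAddCommGroup X] [NormedAddCommGroup U]
    (S : Set (X × U)) (δ : ℝ) : Set (X × U) :=
  {p | ∃ q ∈ S, ‖p.1 - q.1‖ ≤ δ ∧ ‖p.2 - q.2‖ ≤ δ}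

/-- `δs` is a safety clearance of the motion plan `(φ, υ)` (with `(T,J) = max dom`). -/
def HasSafetyClearance {X U : Type*} [NormedAddCommGroup X] [NormedAddCommGroup U]
    (X0 Xf : Set X) (Xu : Set (X × U))
    (φ : ℝ × ℕ → X) (υ : ℝ × ℕ → U) (E : Set (ℝ × ℕ)) (T : ℝ) (J : ℕ)
    (δs : ℝ) : Prop :=
  0 < δs ∧ ∀ δ' ∈ Set.Icc (0 : ℝ) δs,
    closedBall (φ (0, 0)) δ' ⊆ X0 ∧
    closedBall (φ (T, J)) δ' ⊆ Xf ∧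
    ∀ p ∈ E, Disjoint (closedBall (φ p) δ' ×ˢ closedBall (υ p) δ') Xu

/-- `δd` is a dynamics clearance of the motion plan `(φ, υ)` relative to flow set `C`
and jump set `D`. -/
def HasDynamicsClearance {X U : Type*} [NormedAddCommGroup X] [NormedAddCommGroup U]
    (C D : Set (X × U))
    (φ : ℝ × ℕ → X) (υ : ℝ × ℕ → U) (E : Set (ℝ × ℕ)) (δd : ℝ) : Prop :=
  0 < δd ∧ ∀ δ' ∈ Set.Icc (0 : ℝ) δd,
    (∀ p ∈ E, (interior (Slice E p.2)).Nonempty →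
      closedBall (φ p) δ' ×ˢ closedBall (υ p) δ' ⊆ C) ∧
    ∀ p : ℝ × ℕ, p ∈ E → (p.1, p.2 + 1) ∈ E →
      closedBall (φ p) δ' ×ˢ closedBall (υ p) δ' ⊆ D

/-- The hybrid time domain `E` is purely continuous: nontrivial and contained in `ℝ≥0 × {0}`. -/
def IsPurelyContinuous (E : Set (ℝ × ℕ)) : Prop :=
  E.Nontrivial ∧ E ⊆ {p : ℝ × ℕ | p.2 = 0}

/-- The hybrid time domain `E` is purely discrete: nontrivial and contained in `{0} × ℕ`. -/
def IsPurelyDiscrete (E : Set (ℝ × ℕ)) : Prop :=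
  E.Nontrivial ∧ E ⊆ {p : ℝ × ℕ | p.1 = 0}

/-- Two hybrid arcs are `(τ, ε)`-close. -/
def CloseArcs {Y : Type*} [NormedAddCommGroup Y] (τ ε : ℝ)
    (φ1 : ℝ × ℕ → Y) (E1 : Set (ℝ × ℕ)) (φ2 : ℝ × ℕ → Y) (E2 : Set (ℝ × ℕ)) : Prop :=
  (∀ p ∈ E1, p.1 + (p.2 : ℝ) ≤ τ →
    ∃ s : ℝ, (s, p.2) ∈ E2 ∧ |p.1 - s| < ε ∧ ‖φ1 p - φ2 (s, p.2)‖ < ε) ∧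
  (∀ p ∈ E2, p.1 + (p.2 : ℝ) ≤ τ →
    ∃ s : ℝ, (s, p.2) ∈ E1 ∧ |p.1 - s| < ε ∧ ‖φ2 p - φ1 (s, p.2)‖ < ε)


/-!
If `0 = t₀ ≤ ⋯ ≤ t_{J+1} = T` describes `dom υ1` and `0 = s₀ ≤ ⋯ ≤ s_{k+1} = s` describes
`dom υ2` up to `(s, k)`, then `t₀, …, t_J, T + s₁, …, T + s_{k+1}` describes the concatenated
domain up to `(T + s, J + k)`: at jump index `J` the two flows merge into `[t_J, T] ∪ [T, T + s₁]`.

Each slice of the concatenated domain is a slice of `dom υ1`, left of `T` and closed because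
`dom υ1` is compact, united with a translated slice of `dom υ2`, right of `T` and containing its
left endpoint. Hence a point of one piece outside the other has a neighbourhood missing the other,
and measurability and local bounds on the two pieces combine. Since `υ (T, J)` need not be
`υ1 (T, J)`, the first piece is only used up to the null set `{T}`.
-/

open Filter Topology

section DomRestrict

variable {α β γ : Type*} [MeasurableSpace α] [MeasurableSpace β] [MeasurableSpace γ]
  {s t : Set α} {f g : α → β}

theorem Measurable.domRestrict_mono (hst : s ⊆ t) (hf : Measurable (t.domRestrict f)) :
    Measurable (s.domRestrict f) :=
  hf.comp (measurable_inclusion hst)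

theorem Measurable.domRestrict_congr (hfg : EqOn f g s) (hf : Measurable (s.domRestrict f)) :
    Measurable (s.domRestrict g) := by
  rwa [← Set.domRestrict_eq_domRestrict_iff.2 hfg]

theorem Measurable.domRestrict_union (hs : MeasurableSet s) (ht : MeasurableSet t)
    (hfs : Measurable (s.domRestrict f)) (hft : Measurable (t.domRestrict f)) :
    Measurable ((s ∪ t).domRestrict f) :=
  measurable_of_measurable_union_cover (Subtype.val ⁻¹' s) (Subtype.val ⁻¹' t)
    (measurable_subtype_coe hs) (measurable_subtype_coe ht) (fun x _ => x.2)
    (hfs.comp ((measurable_subtype_coe.comp measurable_subtype_coe).subtype_mk (h := (·.2))))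
    (hft.comp ((measurable_subtype_coe.comp measurable_subtype_coe).subtype_mk (h := (·.2))))

theorem Measurable.domRestrict_insert [MeasurableSingletonClass α] (a : α)
    (hs : MeasurableSet s) (hf : Measurable (s.domRestrict f)) :
    Measurable ((insert a s).domRestrict f) :=
  (Subsingleton.measurable (f := ({a} : Set α).domRestrict f)).domRestrict_union
    (measurableSet_singleton a) hs hf

theorem Measurable.domRestrict_preimage {φ : γ → α} (hφ : Measurable φ)
    (hf : Measurable (s.domRestrict f)) : Measurable ((φ ⁻¹' s).domRestrict (f ∘ φ)) :=
  hf.comp (hφ.subtype_map fun _ h => h)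

end DomRestrict

section LocEssBdd

variable {Y : Type*} [NormedAddCommGroup Y] {f g : ℝ → Y} {s t : Set ℝ} {r : ℝ}

def LocEssBddWithinAt (f : ℝ → Y) (s : Set ℝ) (r : ℝ) : Prop :=
  ∃ U : Set ℝ, IsOpen U ∧ r ∈ U ∧ ∃ c : ℝ, 0 ≤ c ∧
    ∀ᵐ t ∂(volume : Measure ℝ), t ∈ U ∩ s → ‖f t‖ ≤ c

theorem locEssBddWithinAt_of_notMem_closure (hr : r ∉ closure s) :
    LocEssBddWithinAt f s r :=
  ⟨(closure s)ᶜ, isClosed_closure.isOpen_compl, hr, 0, le_rfl,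
    .of_forall fun _ ht => (ht.1 (subset_closure ht.2)).elim⟩

theorem LocEssBddWithinAt.union (hs : LocEssBddWithinAt f s r) (ht : LocEssBddWithinAt f t r) :
    LocEssBddWithinAt f (s ∪ t) r := by
  obtain ⟨U, hU, hrU, c, hc, hfU⟩ := hs
  obtain ⟨V, hV, hrV, d, -, hfV⟩ := ht
  refine ⟨U ∩ V, hU.inter hV, ⟨hrU, hrV⟩, max c d, le_max_of_le_left hc, ?_⟩
  filter_upwards [hfU, hfV] with x hxU hxV
  rintro ⟨⟨hx₁, hx₂⟩, hxs | hxt⟩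
  · exact le_max_of_le_left (hxU ⟨hx₁, hxs⟩)
  · exact le_max_of_le_right (hxV ⟨hx₂, hxt⟩)

theorem LocEssBddWithinAt.congr_ae (h : LocEssBddWithinAt f s r)
    (hfg : ∀ᵐ t ∂(volume : Measure ℝ), t ∈ s → f t = g t) : LocEssBddWithinAt g s r := by
  obtain ⟨U, hU, hrU, c, hc, hf⟩ := h
  refine ⟨U, hU, hrU, c, hc, ?_⟩
  filter_upwards [hf, hfg] with x hxf hxg hx
  exact hxg hx.2 ▸ hxf hx

theorem LocEssBddWithinAt.comp_sub_const (h : LocEssBddWithinAt f s r) (T : ℝ) :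
    LocEssBddWithinAt (fun t => f (t - T)) ((· - T) ⁻¹' s) (r + T) := by
  obtain ⟨U, hU, hrU, c, hc, hf⟩ := h
  refine ⟨(· - T) ⁻¹' U, hU.preimage (continuous_sub_right T), by simpa using hrU, c, hc, ?_⟩
  exact (measurePreserving_sub_right volume T).quasiMeasurePreserving.ae hf

end LocEssBdd

section HybridTimeDomain

variable {E E1 E2 : Set (ℝ × ℕ)} {T : ℝ} {J : ℕ}

def hybridIntervals (t : ℕ → ℝ) (J : ℕ) : Set (ℝ × ℕ) :=
  ⋃ j ∈ Iic J, Icc (t j) (t (j + 1)) ×ˢ ({j} : Set ℕ)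

@[simp]
theorem mem_hybridIntervals {t : ℕ → ℝ} {p : ℝ × ℕ} :
    p ∈ hybridIntervals t J ↔ p.2 ≤ J ∧ p.1 ∈ Icc (t p.2) (t (p.2 + 1)) := by
  simp [hybridIntervals]
  tauto

theorem isHybridTimeDomain_iff : IsHybridTimeDomain E ↔ (∀ p ∈ E, 0 ≤ p.1) ∧
    ∀ p ∈ E, ∃ t : ℕ → ℝ, t 0 = 0 ∧ t (p.2 + 1) = p.1 ∧ (∀ j ≤ p.2, t j ≤ t (j + 1)) ∧
      TruncDom E p.1 p.2 = hybridIntervals t p.2 :=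
  Iff.rfl

theorem IsHybridTimeDomain.exists_slice_inter_Icc (hE : IsHybridTimeDomain E) {b : ℝ} {j : ℕ}
    (hb : (b, j) ∈ E) : ∃ a, Slice E j ∩ Icc 0 b = Icc a b := by
  obtain ⟨t, -, hbt, -, htrunc⟩ := (isHybridTimeDomain_iff.1 hE).2 _ hb
  refine ⟨t j, Set.ext fun u => ?_⟩
  simpa [Slice, TruncDom, hbt, and_assoc] using Set.ext_iff.1 htrunc (u, j)

theorem IsHybridTimeDomain.ordConnected_slice (hE : IsHybridTimeDomain E) (j : ℕ) :
    (Slice E j).OrdConnected := by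
  refine ⟨fun u hu b hb c hc => ?_⟩
  obtain ⟨a, ha⟩ := hE.exists_slice_inter_Icc hb
  have hua : u ∈ Icc a b := ha ▸ ⟨hu, hE.1 _ hu, hc.1.trans hc.2⟩
  exact (ha.symm ▸ ⟨hua.1.trans hc.1, hc.2⟩ : c ∈ Slice E j ∩ Icc 0 b).1

theorem IsHybridTimeDomain.exists_isLeast_slice (hE : IsHybridTimeDomain E) {j : ℕ}
    (hne : (Slice E j).Nonempty) : ∃ a, IsLeast (Slice E j) a := by
  obtain ⟨b, hb⟩ := hne
  obtain ⟨a, ha⟩ := hE.exists_slice_inter_Icc hb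
  have hab : a ≤ b := (ha ▸ ⟨hb, hE.1 _ hb, le_rfl⟩ : b ∈ Icc a b).1
  refine ⟨a, (ha.symm ▸ ⟨le_rfl, hab⟩ : a ∈ Slice E j ∩ Icc 0 b).1, fun u hu => ?_⟩
  rcases le_total u b with hub | hbu
  · exact (ha ▸ ⟨hu, hE.1 _ hu, hub⟩ : u ∈ Icc a b).1
  · exact hab.trans hbu

theorem IsHybridTimeDomain.notMem_closure_slice (hE : IsHybridTimeDomain E) {j : ℕ} {r : ℝ}
    (hr : r ≤ 0) (hrE : r ∉ Slice E j) : r ∉ closure (Slice E j) := by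
  rcases (Slice E j).eq_empty_or_nonempty with he | hne
  · simp [he]
  obtain ⟨a, ha, hlb⟩ := hE.exists_isLeast_slice hne
  have hra : r < a := lt_of_le_of_ne (hr.trans (hE.1 _ ha)) (by rintro rfl; exact hrE ha)
  exact fun hcl => hra.not_ge (closure_minimal hlb isClosed_Ici hcl)

def hybridShift (T : ℝ) (J : ℕ) (p : ℝ × ℕ) : ℝ × ℕ := (p.1 + T, p.2 + J)

theorem concatDom_eq : ConcatDom T J E1 E2 = E1 ∪ hybridShift T J '' E2 := rfl

theorem mem_image_hybridShift {S : Set (ℝ × ℕ)} {p : ℝ × ℕ} :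
    p ∈ hybridShift T J '' S ↔ J ≤ p.2 ∧ (p.1 - T, p.2 - J) ∈ S := by
  constructor
  · rintro ⟨q, hq, rfl⟩
    simpa [hybridShift] using hq
  · rintro ⟨hJ, hp⟩
    exact ⟨_, hp, Prod.ext (sub_add_cancel _ _) (Nat.sub_add_cancel hJ)⟩

theorem truncDom_union (E E' : Set (ℝ × ℕ)) (T : ℝ) (J : ℕ) :
    TruncDom (E ∪ E') T J = TruncDom E T J ∪ TruncDom E' T J :=
  union_inter_distrib_right _ _ _

theorem IsMaxOfDomain.truncDom_eq (hmax : IsMaxOfDomain E T J) (hE : IsHybridTimeDomain E) :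
    TruncDom E T J = E :=
  inter_eq_left.2 fun p hp => ⟨⟨hE.1 p hp, (hmax.2 p hp).1⟩, (hmax.2 p hp).2⟩

theorem truncDom_concatDom_of_mem (hE2 : IsHybridTimeDomain E2) (hmax : IsMaxOfDomain E1 T J)
    {p : ℝ × ℕ} (hp : p ∈ E1) :
    TruncDom (ConcatDom T J E1 E2) p.1 p.2 = TruncDom E1 p.1 p.2 := by
  rw [concatDom_eq, truncDom_union, union_eq_left]
  rintro q ⟨hq, hqbox⟩
  obtain ⟨hJq, hq⟩ := mem_image_hybridShift.1 hq
  have hq0 := hE2.1 _ hq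
  obtain ⟨hpT, hpJ⟩ := hmax.2 p hp
  have hqT : q.1 ≤ p.1 := hqbox.1.2
  have hqJ : q.2 ≤ p.2 := hqbox.2
  have hq : q = (T, J) := Prod.ext (by dsimp at hq0; linarith) (by omega)
  exact ⟨hq ▸ hmax.1, hqbox⟩

theorem truncDom_concatDom_hybridShift (hE1 : IsHybridTimeDomain E1)
    (hE2 : IsHybridTimeDomain E2) (hmax : IsMaxOfDomain E1 T J) {s : ℝ} {k : ℕ}
    (hsk : (s, k) ∈ E2) :
    TruncDom (ConcatDom T J E1 E2) (s + T) (k + J) = E1 ∪ hybridShift T J '' TruncDom E2 s k := by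
  have hs := hE2.1 _ hsk
  rw [concatDom_eq, truncDom_union]
  congr 1
  · refine inter_eq_left.2 fun p hp => ?_
    obtain ⟨hpT, hpJ⟩ := hmax.2 p hp
    exact ⟨⟨hE1.1 p hp, by linarith⟩, show p.2 ≤ k + J by omega⟩
  · ext ⟨a, n⟩
    have hT := hE1.1 _ hmax.1
    simp only [TruncDom, mem_inter_iff, mem_image_hybridShift, mem_Icc, mem_prod, mem_ofPred_eq]
    constructor
    · rintro ⟨⟨hJn, hq⟩, ⟨-, ha⟩, hn⟩
      exact ⟨hJn, hq, ⟨hE2.1 _ hq, by linarith⟩, by omega⟩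
    · rintro ⟨hJn, hq, ⟨ha0, ha⟩, hn⟩
      exact ⟨⟨hJn, hq⟩, ⟨by linarith, by linarith⟩, by omega⟩

def concatSeq (t₁ t₂ : ℕ → ℝ) (T : ℝ) (J : ℕ) (i : ℕ) : ℝ :=
  if i ≤ J then t₁ i else t₂ (i - J) + T

section ConcatSeq

variable {t₁ t₂ : ℕ → ℝ} {k : ℕ}

theorem concatSeq_le_succ (ht₁ : ∀ i ≤ J, t₁ i ≤ t₁ (i + 1)) (ht₁J : t₁ (J + 1) = T)
    (ht₂0 : t₂ 0 = 0) (ht₂ : ∀ i ≤ k, t₂ i ≤ t₂ (i + 1)) {i : ℕ} (hi : i ≤ k + J) :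
    concatSeq t₁ t₂ T J i ≤ concatSeq t₁ t₂ T J (i + 1) := by
  unfold concatSeq
  rcases lt_trichotomy i J with h | rfl | h
  · rw [if_pos h.le, if_pos (show i + 1 ≤ J from h)]
    exact ht₁ i h.le
  · rw [if_pos le_rfl, if_neg (by omega), Nat.add_sub_cancel_left]
    linarith [ht₁ i le_rfl, ht₂ 0 (Nat.zero_le k)]
  · rw [if_neg (by omega), if_neg (by omega), show i + 1 - J = i - J + 1 by omega]
    linarith [ht₂ (i - J) (by omega)]

theorem hybridIntervals_concatSeq (ht₁J : t₁ J ≤ t₁ (J + 1)) (hT : t₁ (J + 1) = T)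
    (ht₂0 : t₂ 0 = 0) (ht₂1 : t₂ 0 ≤ t₂ 1) :
    hybridIntervals (concatSeq t₁ t₂ T J) (k + J) =
      hybridIntervals t₁ J ∪ hybridShift T J '' hybridIntervals t₂ k := by
  ext ⟨a, n⟩
  simp only [mem_union, mem_hybridIntervals, mem_image_hybridShift, concatSeq, mem_Icc]
  rcases lt_trichotomy n J with h | rfl | h
  · simp [h.le, h, h.not_ge]
    omega
  · have hT₂ : T ≤ t₂ 1 + T := by linarith
    simpa [ht₂0, hT] using (Set.ext_iff.1 (Icc_union_Icc_eq_Icc (hT ▸ ht₁J) hT₂) a).symm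
  · rw [show n + 1 - J = n - J + 1 by omega]
    simp [h.le, h.not_ge, not_lt.2 h.le, le_sub_iff_add_le]

end ConcatSeq

theorem IsHybridTimeDomain.concatDom (hE1 : IsHybridTimeDomain E1) (hE2 : IsHybridTimeDomain E2)
    (hmax : IsMaxOfDomain E1 T J) : IsHybridTimeDomain (ConcatDom T J E1 E2) := by
  refine isHybridTimeDomain_iff.2 ⟨?_, ?_⟩
  · rintro p (hp | ⟨q, hq, rfl⟩)
    · exact hE1.1 p hp
    · exact add_nonneg (hE2.1 q hq) (hE1.1 _ hmax.1)
  rintro p (hp | ⟨⟨s, k⟩, hsk, rfl⟩)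
  · obtain ⟨t, ht0, htp, ht, htrunc⟩ := (isHybridTimeDomain_iff.1 hE1).2 p hp
    exact ⟨t, ht0, htp, ht, (truncDom_concatDom_of_mem hE2 hmax hp).trans htrunc⟩
  obtain ⟨t₁, ht₁0, ht₁J, ht₁, htrunc₁⟩ := (isHybridTimeDomain_iff.1 hE1).2 _ hmax.1
  obtain ⟨t₂, ht₂0, ht₂k, ht₂, htrunc₂⟩ := (isHybridTimeDomain_iff.1 hE2).2 _ hsk
  dsimp only at ht₁0 ht₁J ht₁ htrunc₁ ht₂0 ht₂k ht₂ htrunc₂ ⊢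
  refine ⟨concatSeq t₁ t₂ T J, by simp [concatSeq, ht₁0],
    by simp [concatSeq, Nat.add_right_comm k J 1, ht₂k],
    fun i hi => concatSeq_le_succ ht₁ ht₁J ht₂0 ht₂ hi, ?_⟩
  rw [truncDom_concatDom_hybridShift hE1 hE2 hmax hsk,
    hybridIntervals_concatSeq (ht₁ J le_rfl) ht₁J ht₂0 (ht₂ 0 (Nat.zero_le k)), ← htrunc₂,
    ← htrunc₁, hmax.truncDom_eq hE1]

end HybridTimeDomain

section Slices

variable {E E1 E2 : Set (ℝ × ℕ)} {T : ℝ} {J j : ℕ}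

theorem slice_concatDom :
    Slice (ConcatDom T J E1 E2) j = Slice E1 j ∪ Slice (hybridShift T J '' E2) j :=
  rfl

theorem slice_image_hybridShift_of_lt (S : Set (ℝ × ℕ)) (h : j < J) :
    Slice (hybridShift T J '' S) j = ∅ :=
  eq_empty_of_forall_notMem fun _ hr => h.not_ge (mem_image_hybridShift.1 hr).1

theorem slice_image_hybridShift_add (S : Set (ℝ × ℕ)) (k : ℕ) :
    Slice (hybridShift T J '' S) (k + J) = (· - T) ⁻¹' Slice S k := by
  ext r
  change (r, k + J) ∈ hybridShift T J '' S ↔ (r - T, k) ∈ S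
  rw [mem_image_hybridShift]
  simp

theorem IsClosed.slice (hE : IsClosed E) (j : ℕ) : IsClosed (Slice E j) :=
  hE.preimage (continuous_id.prodMk continuous_const)

theorem measurableSet_slice_image_hybridShift (hE2 : IsHybridTimeDomain E2) (j : ℕ) :
    MeasurableSet (Slice (hybridShift T J '' E2) j) := by
  rcases lt_or_ge j J with h | h
  · rw [slice_image_hybridShift_of_lt _ h]
    exact .empty
  obtain ⟨k, rfl⟩ := Nat.exists_eq_add_of_le' h
  rw [slice_image_hybridShift_add]
  exact measurable_sub_const T (hE2.ordConnected_slice k).measurableSet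

theorem notMem_closure_slice_image_hybridShift (hE2 : IsHybridTimeDomain E2) {r : ℝ}
    (hr : r ≤ T) (hrS : r ∉ Slice (hybridShift T J '' E2) j) :
    r ∉ closure (Slice (hybridShift T J '' E2) j) := by
  rcases lt_or_ge j J with h | h
  · simp [slice_image_hybridShift_of_lt _ h]
  obtain ⟨k, rfl⟩ := Nat.exists_eq_add_of_le' h
  rw [slice_image_hybridShift_add] at hrS ⊢
  exact fun hcl => hE2.notMem_closure_slice (by linarith) hrS
    ((continuous_sub_right T).closure_preimage_subset _ hcl)

end Slices

section ConcatInput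

variable {Y : Type*} {E E1 E2 : Set (ℝ × ℕ)} {T : ℝ} {J j : ℕ} {υ1 υ2 υ : ℝ × ℕ → Y}

theorem measurableOnSlice_iff [MeasurableSpace Y] :
    MeasurableOnSlice υ E j ↔ Measurable ((Slice E j).domRestrict fun t => υ (t, j)) :=
  Iff.rfl

theorem locEssBddOnSlice_iff [NormedAddCommGroup Y] :
    LocEssBddOnSlice υ E j ↔
      ∀ r ∈ Slice E j, LocEssBddWithinAt (fun t => υ (t, j)) (Slice E j) r :=
  Iff.rfl

theorem IsConcatOf.eq_left (hconcat : IsConcatOf T J E1 E2 υ1 υ2 υ) {t : ℝ}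
    (ht : t ∈ Slice E1 j) (htT : t ≠ T) : υ (t, j) = υ1 (t, j) :=
  hconcat.1 _ ht fun h => htT (congrArg Prod.fst h)

theorem measurableOnSlice_image_hybridShift [MeasurableSpace Y]
    (hυ : ∀ p ∈ E2, υ (hybridShift T J p) = υ2 p) (h2 : ∀ k, MeasurableOnSlice υ2 E2 k)
    (j : ℕ) : MeasurableOnSlice υ (hybridShift T J '' E2) j := by
  rw [measurableOnSlice_iff]
  rcases lt_or_ge j J with h | h
  · rw [slice_image_hybridShift_of_lt _ h]
    exact measurable_of_empty _
  obtain ⟨k, rfl⟩ := Nat.exists_eq_add_of_le' h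
  rw [slice_image_hybridShift_add]
  refine (Measurable.domRestrict_preimage (measurable_sub_const T) (h2 k)).domRestrict_congr
    fun r hr => ?_
  simpa [hybridShift] using (hυ _ hr).symm

theorem locEssBddOnSlice_image_hybridShift [NormedAddCommGroup Y]
    (hυ : ∀ p ∈ E2, υ (hybridShift T J p) = υ2 p) (h2 : ∀ k, LocEssBddOnSlice υ2 E2 k)
    (j : ℕ) : LocEssBddOnSlice υ (hybridShift T J '' E2) j := by
  rcases lt_or_ge j J with h | h
  · simp [LocEssBddOnSlice, slice_image_hybridShift_of_lt _ h]
  obtain ⟨k, rfl⟩ := Nat.exists_eq_add_of_le' h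
  rw [locEssBddOnSlice_iff, slice_image_hybridShift_add]
  intro r hr
  have h2r := (locEssBddOnSlice_iff.1 (h2 k) (r - T) hr).comp_sub_const T
  rw [sub_add_cancel] at h2r
  refine h2r.congr_ae (.of_forall fun t ht => ?_)
  simpa [hybridShift] using (hυ _ ht).symm

theorem measurableOnSlice_concatDom [MeasurableSpace Y] (hE1 : IsHybridTimeDomain E1)
    (hE2 : IsHybridTimeDomain E2) (hconcat : IsConcatOf T J E1 E2 υ1 υ2 υ)
    (h1 : MeasurableOnSlice υ1 E1 j) (h2 : ∀ k, MeasurableOnSlice υ2 E2 k) :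
    MeasurableOnSlice υ (ConcatDom T J E1 E2) j := by
  set A := Slice E1 j
  set B := Slice (hybridShift T J '' E2) j
  have hA : MeasurableSet (A \ {T}) :=
    (hE1.ordConnected_slice j).measurableSet.diff (measurableSet_singleton T)
  have hB : MeasurableSet B := measurableSet_slice_image_hybridShift hE2 j
  have hυA : Measurable ((A \ {T}).domRestrict fun t => υ (t, j)) :=
    (Measurable.domRestrict_mono sdiff_subset h1).domRestrict_congr
      fun t ht => (hconcat.eq_left ht.1 ht.2).symm
  have hυB : Measurable (B.domRestrict fun t => υ (t, j)) :=
    measurableOnSlice_image_hybridShift hconcat.2 h2 j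
  have hcover : A ∪ B ⊆ insert T (A \ {T} ∪ B) := by
    rw [← insert_union, insert_sdiff_singleton]
    exact union_subset_union_left B (subset_insert T A)
  rw [measurableOnSlice_iff, slice_concatDom]
  exact ((hυA.domRestrict_union hA hB hυB).domRestrict_insert T (hA.union hB)).domRestrict_mono
    hcover

theorem locEssBddOnSlice_concatDom [NormedAddCommGroup Y] (hE1 : IsClosed E1)
    (hE2 : IsHybridTimeDomain E2) (hmax : IsMaxOfDomain E1 T J)
    (hconcat : IsConcatOf T J E1 E2 υ1 υ2 υ) (h1 : LocEssBddOnSlice υ1 E1 j)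
    (h2 : ∀ k, LocEssBddOnSlice υ2 E2 k) : LocEssBddOnSlice υ (ConcatDom T J E1 E2) j := by
  rw [locEssBddOnSlice_iff, slice_concatDom]
  intro r hr
  refine LocEssBddWithinAt.union ?_ ?_
  · by_cases hrA : r ∈ Slice E1 j
    · refine (locEssBddOnSlice_iff.1 h1 r hrA).congr_ae ?_
      filter_upwards [Measure.ae_ne volume T] with t htT htA
      exact (hconcat.eq_left htA htT).symm
    · exact locEssBddWithinAt_of_notMem_closure ((hE1.slice j).closure_eq.symm ▸ hrA)
  · by_cases hrB : r ∈ Slice (hybridShift T J '' E2) j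
    · exact locEssBddOnSlice_iff.1 (locEssBddOnSlice_image_hybridShift hconcat.2 h2 j) r hrB
    · exact locEssBddWithinAt_of_notMem_closure <| notMem_closure_slice_image_hybridShift hE2
        (hmax.2 _ (hr.resolve_right hrB)).1 hrB

end ConcatInput

/-- the concatenation of two hybrid inputs is a hybrid input. -/
theorem concat_isHybridInput
    {m : ℕ} {E1 E2 : Set (ℝ × ℕ)}
    {υ1 υ2 υ : ℝ × ℕ → EuclideanSpace ℝ (Fin m)}
    (h1 : IsHybridInput υ1 E1) (h2 : IsHybridInput υ2 E2)
    (hcompact : IsCompact E1)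
    {T : ℝ} {J : ℕ} (hmax : IsMaxOfDomain E1 T J)
    (hconcat : IsConcatOf T J E1 E2 υ1 υ2 υ) :
    IsHybridInput υ (ConcatDom T J E1 E2) :=
  ⟨h1.1.concatDom h2.1 hmax, fun j =>
    ⟨measurableOnSlice_concatDom h1.1 h2.1 hconcat (h1.2 j).1 fun k => (h2.2 k).1,
      locEssBddOnSlice_concatDom hcompact.isClosed h2.1 hmax hconcat (h1.2 j).2
        fun k => (h2.2 k).2⟩⟩
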